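/- Let (X, ι_X, L_X) be a Bachmann-Howard system for a prae-dilator T, with the linear order <_{ϑ_T(X)} and subterm function E_X. Then ϑρ ∈ E_X(ϑσ) implies ϑρ ≤_{ϑ_T(X)} ϑσ. -/

import Mathlib

/-! Data for a Bachmann-Howard system: `X` is a linear order, `S` is the linear order
`T_X` (the value of a prae-dilator at `X`), whose elements `σ` simultaneously index the
terms `ϑσ` making up the set `ϑ_T(X)`.  So `supp : S → Finset X` is the support function
`supp^T_X`, `ι : X → S` is the function `ι_X : X → ϑ_T(X)` (identifying terms with their
indices), and `L : X → ℕ` is the length function `L_X`. -/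
structure BHData (X S : Type) [LinearOrder X] [LinearOrder S] where
  supp : S → Finset X
  ι : X → S
  L : X → ℕ

variable {X S : Type} [LinearOrder X] [LinearOrder S]

/-- The induced length function `L_{ϑ_T(X)}(ϑσ) = max{L_X(x) | x ∈ supp σ} + 1`
(with the maximum over the empty set being `0`). -/
def BHData.Lv (D : BHData X S) (σ : S) : ℕ := (D.supp σ).sup D.L + 1

/-- `(X, ι, L)` is a Bachmann-Howard system: `L_{ϑ_T(X)} ∘ ι_X = L_X`. -/
def BHData.IsBH (D : BHData X S) : Prop := ∀ x : X, D.Lv (D.ι x) = D.L x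

/-- The recursively defined relation `ϑσ <_{ϑ_T(X)} ϑτ`: either
(i) `σ <_{T_X} τ` and `ι_X(x) < ϑτ` for all `x ∈ supp σ`, or
(ii) `τ <_{T_X} σ` and `ϑσ ≤ ι_X(x)` for some `x ∈ supp τ`
(the clause (ii) is split according to `ϑσ < ι_X(x)` or `ϑσ = ι_X(x)`).
For a Bachmann-Howard system this least fixed point satisfies the defining
recursion, which is well-founded along `Lv`. -/
inductive BHData.lt (D : BHData X S) : S → S → Prop
  | left {σ τ : S} : σ < τ → (∀ x ∈ D.supp σ, D.lt (D.ι x) τ) → D.lt σ τ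
  | right_lt {σ τ : S} (x : X) : τ < σ → x ∈ D.supp τ → D.lt σ (D.ι x) → D.lt σ τ
  | right_eq {σ τ : S} (x : X) : τ < σ → x ∈ D.supp τ → σ = D.ι x → D.lt σ τ

/-! A proper subterm `ρ` of `σ` lies in `E(ι x)` for some `x ∈ supp σ`, so it is strictly
shorter than `σ`; we induct on `Lv ρ + Lv σ`. If `σ < ρ` in `T_X`, the induction hypothesis
gives `ϑρ ≤ ι x`, which is clause (ii). If `ρ < σ`, each `ι y` with `y ∈ supp ρ` is again a
subterm of `σ`, shorter than `σ` and hence different from it, so the induction hypothesis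
gives `ι y < ϑσ`, which is clause (i). -/

namespace BHData

variable {D : BHData X S}

theorem Lv_ι_lt (hD : D.IsBH) {σ : S} {x : X} (hx : x ∈ D.supp σ) :
    D.Lv (D.ι x) < D.Lv σ := by
  rw [hD x]
  exact Nat.lt_succ_of_le (Finset.le_sup hx)

theorem lt_of_le_ι_of_mem_supp {σ τ : S} {x : X} (hτσ : τ < σ) (hx : x ∈ D.supp τ)
    (h : D.lt σ (D.ι x) ∨ σ = D.ι x) : D.lt σ τ :=
  h.elim (lt.right_lt x hτσ hx) (lt.right_eq x hτσ hx)

variable (D) in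
def IsSubtermFn (E : S → Finset S) : Prop :=
  ∀ σ ρ : S, ρ ∈ E σ ↔ ρ = σ ∨ ∃ x ∈ D.supp σ, ρ ∈ E (D.ι x)

namespace IsSubtermFn

variable {E : S → Finset S}

theorem self_mem (hE : D.IsSubtermFn E) (σ : S) : σ ∈ E σ :=
  (hE σ σ).2 (Or.inl rfl)

theorem ι_mem (hE : D.IsSubtermFn E) {σ : S} {x : X} (hx : x ∈ D.supp σ) : D.ι x ∈ E σ :=
  (hE σ _).2 (Or.inr ⟨x, hx, hE.self_mem _⟩)

theorem Lv_le (hD : D.IsBH) (hE : D.IsSubtermFn E) {ρ σ : S} (h : ρ ∈ E σ) :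
    D.Lv ρ ≤ D.Lv σ := by
  rcases (hE σ ρ).1 h with rfl | ⟨x, hx, hρx⟩
  · exact le_rfl
  exact (hE.Lv_le hD hρx).trans (Lv_ι_lt hD hx).le
termination_by D.Lv σ
decreasing_by exact Lv_ι_lt hD hx

theorem mem_trans (hD : D.IsBH) (hE : D.IsSubtermFn E) {τ ρ σ : S} (hτ : τ ∈ E ρ)
    (hρ : ρ ∈ E σ) : τ ∈ E σ := by
  rcases (hE σ ρ).1 hρ with rfl | ⟨x, hx, hρx⟩
  · exact hτ
  exact (hE σ τ).2 (Or.inr ⟨x, hx, hE.mem_trans hD hτ hρx⟩)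
termination_by D.Lv σ
decreasing_by exact Lv_ι_lt hD hx

end IsSubtermFn

end BHData

/-- Subterms are weakly smaller: `ϑρ ∈ E(ϑσ)` implies `ϑρ ≤_{ϑ_T(X)} ϑσ`. -/
theorem BHData.subterm_le (D : BHData X S) (hD : D.IsBH) (E : S → Finset S)
    (hE : ∀ σ ρ : S, ρ ∈ E σ ↔ ρ = σ ∨ ∃ x ∈ D.supp σ, ρ ∈ E (D.ι x)) :
    ∀ ρ σ : S, ρ ∈ E σ → D.lt ρ σ ∨ ρ = σ := by
  intro ρ σ hρσ
  have hE' : D.IsSubtermFn E := hE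
  rcases (hE σ ρ).1 hρσ with rfl | ⟨x, hx, hρx⟩
  · exact Or.inr rfl
  have hLv : D.Lv ρ < D.Lv σ := (hE'.Lv_le hD hρx).trans_lt (Lv_ι_lt hD hx)
  left
  rcases lt_trichotomy ρ σ with hlt | rfl | hgt
  · refine lt.left hlt fun y hy => ?_
    have hyρ := Lv_ι_lt hD hy
    have hyσ := hE'.mem_trans hD (hE'.ι_mem hy) hρσ
    exact (BHData.subterm_le D hD E hE _ σ hyσ).resolve_right (by rintro rfl; omega)
  · exact (lt_irrefl _ hLv).elim
  · exact lt_of_le_ι_of_mem_supp hgt hx (BHData.subterm_le D hD E hE ρ _ hρx)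
termination_by ρ σ => D.Lv ρ + D.Lv σ
decreasing_by
  · omega
  · have := Lv_ι_lt hD hx
    omega
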